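/- Let m ≥ 2 be an integer and ε = 1/(2m). For every q ∈ ℝ^m there exists a probability vector u ∈ ℝ^m (u_i ≥ 0, ∑_{i=1}^m u_i = 1) such that for all v ∈ [0,1]: ∑_{i=1}^m u_i q_i (M_i − v) ≤ ε ‖q‖_∞, where ‖q‖_∞ = max_i |q_i|. (Halfspace-satisfiability: Val(q) = min_{u} max_{v∈[0,1]} ( ∑_i u_i q_i (M_i − v) − ε‖q‖_∞ ) ≤ 0 for every q.) -/

import Mathlib

/-- Gridpoint M_i = (2i-1)/(2m). -/
noncomputable def Mg (m i : ℕ) : ℝ := (2 * (i : ℝ) - 1) / (2 * m)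

lemma hs_sum_single (m j : ℕ) (hj : j ∈ Finset.Icc 1 m) (a : ℝ) (f : ℕ → ℝ) :
    ∑ i ∈ Finset.Icc 1 m, (if i = j then a else 0) * f i = a * f j := by
  rw [Finset.sum_congr rfl (g := fun i => if i = j then a * f i else 0)
    (fun i _ => by split_ifs with h <;> simp [h])]
  rw [Finset.sum_ite_eq' (Finset.Icc 1 m) j fun i => a * f i, if_pos hj]

lemma hs_sum_pair (m k : ℕ) (hk : k ∈ Finset.Icc 1 m) (hk1 : k + 1 ∈ Finset.Icc 1 m)
    (a b : ℝ) (f : ℕ → ℝ) :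
    ∑ i ∈ Finset.Icc 1 m, (if i = k then a else if i = k + 1 then b else 0) * f i
      = a * f k + b * f (k + 1) := by
  have h : ∀ i ∈ Finset.Icc 1 m, (if i = k then a else if i = k + 1 then b else 0) * f i
      = (if i = k then a * f i else 0) + (if i = k + 1 then b * f i else 0) := by
    intro i _
    by_cases h1 : i = k
    · have h2 : ¬ i = k + 1 := by omega
      simp [h1, h2]
    · by_cases h2 : i = k + 1 <;> simp [h1, h2]
  rw [Finset.sum_congr rfl h, Finset.sum_add_distrib,
    Finset.sum_ite_eq' (Finset.Icc 1 m) k fun i => a * f i,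
    Finset.sum_ite_eq' (Finset.Icc 1 m) (k + 1) fun i => b * f i, if_pos hk, if_pos hk1]

lemma hs_ivt (P : ℕ → Prop) : ∀ (n a : ℕ), P a → ¬ P (a + n) →
    ∃ k, a ≤ k ∧ k < a + n ∧ P k ∧ ¬ P (k + 1) := by
  intro n
  induction n with
  | zero => intro a h h'; exact absurd h h'
  | succ n ih =>
    intro a h h'
    by_cases hn : P (a + n)
    · exact ⟨a + n, by omega, by omega, hn, by rwa [show a + n + 1 = a + (n + 1) by omega]⟩
    · obtain ⟨k, h1, h2, h3, h4⟩ := ih a h hn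
      exact ⟨k, h1, by omega, h3, h4⟩

/-- Proposition A.2, halfspace-satisfiability: for every
q ∈ ℝ^m there is a probability vector u such that for all v ∈ [0,1],
∑_{i=1}^m u_i q_i (M_i − v) ≤ ε ‖q‖_∞, where ε = 1/(2m) and
‖q‖_∞ = max_{1 ≤ i ≤ m} |q_i|.  I.e. Val(q) ≤ 0 for every q. -/
theorem halfspace_satisfiability (m : ℕ) (hm : 2 ≤ m) (q : ℕ → ℝ) :
    ∃ u : ℕ → ℝ, (∀ i, 1 ≤ i → i ≤ m → 0 ≤ u i) ∧
      (∑ i ∈ Finset.Icc 1 m, u i) = 1 ∧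
      ∀ v ∈ Set.Icc (0 : ℝ) 1,
        (∑ i ∈ Finset.Icc 1 m, u i * q i * (Mg m i - v))
          ≤ 1 / (2 * m) *
            (Finset.Icc 1 m).sup' (Finset.nonempty_Icc.mpr (by omega : (1 : ℕ) ≤ m))
              (fun i => |q i|) := by
  have hne : (Finset.Icc 1 m).Nonempty := Finset.nonempty_Icc.mpr (by omega)
  set Q := (Finset.Icc 1 m).sup' (Finset.nonempty_Icc.mpr (by omega : (1 : ℕ) ≤ m))
    (fun i => |q i|) with hQdef
  have hmem : ∀ j, 1 ≤ j → j ≤ m → j ∈ Finset.Icc 1 m := by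
    intro j h1 h2; exact Finset.mem_Icc.mpr ⟨h1, h2⟩
  have hQle : ∀ j, 1 ≤ j → j ≤ m → |q j| ≤ Q := by
    intro j h1 h2
    exact Finset.le_sup' (fun i => |q i|) (hmem j h1 h2)
  have hQ0 : 0 ≤ Q := le_trans (abs_nonneg (q 1)) (hQle 1 le_rfl (by omega))
  have hm0 : (0 : ℝ) < m := by positivity
  by_cases hq1 : 0 ≤ q 1
  · -- point mass on 1
    refine ⟨fun i => if i = 1 then 1 else 0, ?_, ?_, ?_⟩
    · intro i _ _; dsimp only; split_ifs <;> norm_num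
    · have := hs_sum_single m 1 (hmem 1 le_rfl (by omega)) 1 (fun _ => 1)
      simpa using this
    · intro v hv
      rw [Finset.sum_congr rfl (fun i _ => mul_assoc _ (q i) _),
        hs_sum_single m 1 (hmem 1 le_rfl (by omega)) 1 (fun i => q i * (Mg m i - v))]
      have hM : Mg m 1 = 1 / (2 * m) := by unfold Mg; norm_num
      have hq1Q : q 1 ≤ Q := le_trans (le_abs_self _) (hQle 1 le_rfl (by omega))
      rw [hM]
      have h1 : 0 < 1 / (2 * (m : ℝ)) := by positivity
      nlinarith [mul_nonneg hq1 hv.1, mul_le_mul_of_nonneg_right hq1Q h1.le]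
  · by_cases hqm : q m ≤ 0
    · -- point mass on m
      refine ⟨fun i => if i = m then 1 else 0, ?_, ?_, ?_⟩
      · intro i _ _; dsimp only; split_ifs <;> norm_num
      · have := hs_sum_single m m (hmem m (by omega) le_rfl) 1 (fun _ => 1)
        simpa using this
      · intro v hv
        rw [Finset.sum_congr rfl (fun i _ => mul_assoc _ (q i) _),
          hs_sum_single m m (hmem m (by omega) le_rfl) 1 (fun i => q i * (Mg m i - v))]
        have hM : Mg m m = 1 - 1 / (2 * m) := by
          unfold Mg; field_simp
        have hqmQ : -q m ≤ Q := le_trans (neg_le_abs _) (hQle m (by omega) le_rfl)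
        rw [hM]
        have h1 : 0 < 1 / (2 * (m : ℝ)) := by positivity
        nlinarith [mul_nonneg (neg_nonneg.mpr hqm) (sub_nonneg.mpr hv.2),
          mul_le_mul_of_nonneg_right hqmQ h1.le]
    · -- q 1 < 0 < q m : find sign flip
      push_neg at hq1 hqm
      obtain ⟨k, hk1, hk2, hk3, hk4⟩ := hs_ivt (fun i => q i < 0) (m - 1) 1 hq1
        (by rw [show 1 + (m - 1) = m by omega]; exact not_lt.mpr hqm.le)
      have hkm : k < m := by omega
      push_neg at hk4
      by_cases hz : q (k + 1) = 0
      · -- point mass on k+1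
        refine ⟨fun i => if i = k + 1 then 1 else 0, ?_, ?_, ?_⟩
        · intro i _ _; dsimp only; split_ifs <;> norm_num
        · have := hs_sum_single m (k + 1) (hmem (k + 1) (by omega) (by omega)) 1 (fun _ => 1)
          simpa using this
        · intro v hv
          rw [Finset.sum_congr rfl (fun i _ => mul_assoc _ (q i) _),
            hs_sum_single m (k + 1) (hmem (k + 1) (by omega) (by omega)) 1
              (fun i => q i * (Mg m i - v))]
          rw [hz]
          have : 0 ≤ 1 / (2 * (m : ℝ)) * Q := by positivity
          nlinarith
      · -- pair on k, k+1
        have hB : 0 < q (k + 1) := lt_of_le_of_ne hk4 (Ne.symm hz)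
        set A := q k with hA
        set B := q (k + 1) with hBdef
        have hS : 0 < B - A := by linarith
        refine ⟨fun i => if i = k then B / (B - A) else if i = k + 1 then -A / (B - A) else 0,
          ?_, ?_, ?_⟩
        · intro i _ _
          dsimp only
          split_ifs
          · positivity
          · exact div_nonneg (by linarith) hS.le
          · exact le_refl 0
        · have := hs_sum_pair m k (hmem k hk1 hkm.le) (hmem (k + 1) (by omega) (by omega))
            (B / (B - A)) (-A / (B - A)) (fun _ => 1)
          simp only [mul_one] at this
          rw [this]
          field_simp
          ring
        · intro v hv
          rw [Finset.sum_congr rfl (fun i _ => mul_assoc _ (q i) _),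
            hs_sum_pair m k (hmem k hk1 hkm.le) (hmem (k + 1) (by omega) (by omega))
              (B / (B - A)) (-A / (B - A)) (fun i => q i * (Mg m i - v))]
          have hMdiff : Mg m (k + 1) = Mg m k + 1 / m := by
            unfold Mg; push_cast; field_simp; ring
          have key : B / (B - A) * (q k * (Mg m k - v))
              + -A / (B - A) * (q (k + 1) * (Mg m (k + 1) - v))
              = -(A * B) / ((B - A) * m) := by
            rw [hMdiff, ← hA, ← hBdef]
            field_simp
            ring
          rw [key]
          have hAQ : -A ≤ Q := le_trans (neg_le_abs _) (hQle k hk1 hkm.le)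
          have hBQ : B ≤ Q := le_trans (le_abs_self _) (hQle (k + 1) (by omega) (by omega))
          have h2 : -(A * B) * 2 ≤ Q * (B - A) := by nlinarith
          rw [div_le_iff₀ (by positivity : (0 : ℝ) < (B - A) * m)]
          have heq : 1 / (2 * (m : ℝ)) * Q * ((B - A) * m) = Q * (B - A) / 2 := by
            field_simp
          rw [heq]
          linarith
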